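/- arXiv:2103.08629 — 2 statements merged into one kernel-verified Lean document; each statement's English description precedes it below -/
import Mathlib

section
/- With scalar data from Example 1 of the paper (A_* = B_* = 1/2, x(0)=1, u(0)=1, u(1)=-1, u(2)=0, zero disturbance, so x(1)=1, x(2)=0, x(3)=0, and ε = 1), the consistency sets satisfy: 𝓒(2) ⊆ 𝓒(3), and 𝓒(3) is not contained in 𝓒(2); i.e., the energy-bound consistency set can strictly grow with more data. -/
/-- State data of Example 1: `x(0)=x(1)=1`, `x(2)=x(3)=0`. -/
noncomputable def exX : ℕ → ℝ := fun i => if i ≤ 1 then 1 else 0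

/-- Input data of Example 1: `u(0)=1`, `u(1)=-1`, `u(2)=0`. -/
noncomputable def exU : ℕ → ℝ := fun i => if i = 0 then 1 else if i = 1 then -1 else 0

/-- Energy-bound consistency set with `ε = 1` and `T` data points. -/
noncomputable def exC (T : ℕ) : Set (ℝ × ℝ) :=
  {p : ℝ × ℝ |
    0 ≤ (T : ℝ) * 1 - ∑ i ∈ Finset.range T, (exX (i + 1) - p.1 * exX i - p.2 * exU i) ^ 2}

/-- With the data of Example 1, `𝓒(2) ⊆ 𝓒(3)` but `𝓒(3) ⊄ 𝓒(2)`: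
the energy-bound consistency set can strictly grow with more data. -/
theorem stmt13 : exC 2 ⊆ exC 3 ∧ ¬ exC 3 ⊆ exC 2 := by
  constructor
  · intro p hp
    simp only [exC, exX, exU, Set.mem_setOf_eq, Finset.sum_range_succ,
      Finset.sum_range_zero] at hp ⊢
    norm_num at hp ⊢
    linarith
  · intro h
    have h3 : ((13:ℝ)/10, 13/10) ∈ exC 3 := by
      simp only [exC, exX, exU, Set.mem_setOf_eq, Finset.sum_range_succ,
        Finset.sum_range_zero]
      norm_num
    have h2 := h h3
    simp only [exC, exX, exU, Set.mem_setOf_eq, Finset.sum_range_succ,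
      Finset.sum_range_zero] at h2
    norm_num at h2
end

section
/- Boundedness of the consistency set: if the matrix [X_0; U_0] ∈ ℝ^{(n+m)×T} has full row rank (equivalently 𝖠 := [X_0; U_0][X_0; U_0]^T ≻ 0), then the set 𝓒 = {(A,B) : [A B] 𝖠 [A B]^T + [A B] 𝖡 + 𝖡^T [A B]^T + 𝖢 ⪯ 0} is bounded, for any 𝖡 ∈ ℝ^{(n+m)×n} and symmetric 𝖢 ∈ ℝ^{n×n}. -/
/-!
A positive definite quadratic form dominates `c ‖v‖²` for some `c > 0` (its minimum on the
compact unit sphere), so every sublevel set `{v | vᵀ A v + bᵀ v + γ ≤ 0}` is bounded. The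
`(i, i)` diagonal entry of the matrix inequality places the `i`-th row of `Z` in such a set,
with `b` twice the `i`-th column of `Bs` and `γ = Cs i i`; finitely many rows give one bound.
-/

open Matrix

namespace Matrix

variable {k : Type*} [Fintype k]

theorem abs_dotProduct_le (b v : k → ℝ) : |b ⬝ᵥ v| ≤ (∑ j, |b j|) * ‖v‖ :=
  calc |∑ j, b j * v j| ≤ ∑ j, |b j * v j| := Finset.abs_sum_le_sum_abs _ _
    _ ≤ ∑ j, |b j| * ‖v‖ := by
      gcongr with j
      rw [abs_mul, ← Real.norm_eq_abs (v j)]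
      gcongr
      exact norm_le_pi_norm v j
    _ = (∑ j, |b j|) * ‖v‖ := (Finset.sum_mul ..).symm

theorem PosDef.exists_pos_mul_norm_sq_le {A : Matrix k k ℝ} (hA : A.PosDef) :
    ∃ c > 0, ∀ v : k → ℝ, c * ‖v‖ ^ 2 ≤ v ⬝ᵥ A *ᵥ v := by
  have hq : Continuous fun v : k → ℝ => v ⬝ᵥ A *ᵥ v := by fun_prop
  obtain ⟨c, hc, hmin⟩ := (isCompact_sphere (0 : k → ℝ) 1).exists_forall_le' hq.continuousOn
    fun u hu => hA.dotProduct_mulVec_pos (ne_zero_of_mem_unit_sphere ⟨u, hu⟩)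
  refine ⟨c, hc, fun v => ?_⟩
  rcases eq_or_ne v 0 with rfl | hv
  · simp
  have hpos : 0 < ‖v‖ := norm_pos_iff.mpr hv
  have hunit : ‖v‖⁻¹ • v ∈ Metric.sphere (0 : k → ℝ) 1 := by
    simp [norm_smul, hpos.ne']
  have hscale : (‖v‖⁻¹ • v) ⬝ᵥ A *ᵥ (‖v‖⁻¹ • v) = ‖v‖⁻¹ ^ 2 * (v ⬝ᵥ A *ᵥ v) := by
    simp only [mulVec_smul, smul_dotProduct, dotProduct_smul, smul_eq_mul]
    ring
  calc c * ‖v‖ ^ 2 ≤ ‖v‖⁻¹ ^ 2 * (v ⬝ᵥ A *ᵥ v) * ‖v‖ ^ 2 := by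
        gcongr; exact hscale ▸ hmin _ hunit
    _ = v ⬝ᵥ A *ᵥ v := by field_simp

theorem PosDef.isBounded_setOf_quadratic_nonpos {A : Matrix k k ℝ} (hA : A.PosDef)
    (b : k → ℝ) (γ : ℝ) :
    Bornology.IsBounded {v : k → ℝ | v ⬝ᵥ A *ᵥ v + b ⬝ᵥ v + γ ≤ 0} := by
  obtain ⟨c, hc, hcoer⟩ := hA.exists_pos_mul_norm_sq_le
  set β := ∑ j, |b j|
  refine isBounded_iff_forall_norm_le.mpr ⟨1 + (β + |γ|) / c, fun v hv => ?_⟩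
  have hβ : 0 ≤ β := Finset.sum_nonneg fun j _ => abs_nonneg (b j)
  have hquad : c * ‖v‖ ^ 2 ≤ β * ‖v‖ + |γ| :=
    calc c * ‖v‖ ^ 2 ≤ v ⬝ᵥ A *ᵥ v := hcoer v
      _ ≤ -(b ⬝ᵥ v) - γ := by linarith [hv.out]
      _ ≤ |b ⬝ᵥ v| + |γ| := by linarith [neg_abs_le (b ⬝ᵥ v), neg_abs_le γ]
      _ ≤ β * ‖v‖ + |γ| := by gcongr; exact abs_dotProduct_le b v
  suffices c * (‖v‖ - 1) ≤ β + |γ| by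
    rw [← sub_le_iff_le_add', le_div_iff₀ hc]
    linarith
  -- once `‖v‖ > 1`, `|γ| ≤ |γ| ‖v‖` and `hquad` divides by `‖v‖`
  nlinarith [norm_nonneg v, abs_nonneg γ]

end Matrix

theorem stmt19_general (n m : ℕ)
    (As : Matrix (Fin n ⊕ Fin m) (Fin n ⊕ Fin m) ℝ)
    (hA : As.PosDef)
    (Bs : Matrix (Fin n ⊕ Fin m) (Fin n) ℝ)
    (Cs : Matrix (Fin n) (Fin n) ℝ) :
    ∃ R : ℝ, ∀ Z : Matrix (Fin n) (Fin n ⊕ Fin m) ℝ,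
      (-(Z * As * Zᵀ + Z * Bs + Bsᵀ * Zᵀ + Cs)).PosSemidef →
      ∀ i j, |Z i j| ≤ R := by
  choose R hR using fun i : Fin n =>
    isBounded_iff_forall_norm_le.mp (hA.isBounded_setOf_quadratic_nonpos (2 • Bsᵀ i) (Cs i i))
  obtain ⟨M, hM⟩ := (Set.finite_range R).bddAbove
  refine ⟨M, fun Z hZ i j => ?_⟩
  have hrow : Z i ⬝ᵥ As *ᵥ Z i + (2 • Bsᵀ i) ⬝ᵥ Z i + Cs i i ≤ 0 := by
    have hquad : (Z * As * Zᵀ) i i = Z i ⬝ᵥ As *ᵥ Z i := by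
      rw [Matrix.mul_assoc, mul_apply']; rfl
    have hlin : (Z * Bs) i i + (Bsᵀ * Zᵀ) i i = (2 • Bsᵀ i) ⬝ᵥ Z i := by
      change Z i ⬝ᵥ Bsᵀ i + Bsᵀ i ⬝ᵥ Z i = _
      rw [two_smul, add_dotProduct, dotProduct_comm (Z i)]
    have hdiag := hZ.diag_nonneg (i := i)
    simp only [Matrix.neg_apply, Matrix.add_apply] at hdiag
    linarith
  calc |Z i j| = ‖Z i j‖ := (Real.norm_eq_abs _).symm
    _ ≤ ‖Z i‖ := norm_le_pi_norm (Z i) j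
    _ ≤ R i := hR i _ hrow
    _ ≤ M := hM ⟨i, rfl⟩

/-- Boundedness of the energy-bound consistency set: if
`As = [X₀; U₀][X₀; U₀]ᵀ ≻ 0` (full row rank data), then
`𝓒 = {Z : Z As Zᵀ + Z Bs + Bsᵀ Zᵀ + Cs ⪯ 0}` is bounded (contained in a norm ball,
here stated entrywise). -/
theorem stmt19 (n m T : ℕ)
    (X₀ : Matrix (Fin n) (Fin T) ℝ) (U₀ : Matrix (Fin m) (Fin T) ℝ)
    (As : Matrix (Fin n ⊕ Fin m) (Fin n ⊕ Fin m) ℝ)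
    (hAs : As = fromRows X₀ U₀ * (fromRows X₀ U₀)ᵀ) (hA : As.PosDef)
    (Bs : Matrix (Fin n ⊕ Fin m) (Fin n) ℝ)
    (Cs : Matrix (Fin n) (Fin n) ℝ) (hCs : Cs.IsSymm) :
    ∃ R : ℝ, ∀ Z : Matrix (Fin n) (Fin n ⊕ Fin m) ℝ,
      (-(Z * As * Zᵀ + Z * Bs + Bsᵀ * Zᵀ + Cs)).PosSemidef →
      ∀ i j, |Z i j| ≤ R :=
  stmt19_general n m As hA Bs Cs
end
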